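/- Corollary 3.2 (piecewise polynomial structure). Let E be a nonempty integral gain graph on vertex set {1,…,n} with n ≥ 1, and for an integer m ≥ 0 let f(m) be the number of proper maps x : {1,…,n} → {1,2,…,m}. Then there exist an integer k ≥ 1, positive integers d_1,…,d_k with d_1 = n and d_j < n for all j ≥ 2, positive integers μ_1 = 1, μ_2, …, μ_k, and for each j ∈ {1,…,k} nonnegative integers r_{j,1} ≥ r_{j,2} ≥ … ≥ r_{j,d_j} ≥ 0 with r_{1,i} = 0 for all i, such that for every integer m ≥ 0: f(m) = ∑_{j : r_{j,1} ≤ m} (−1)^{n−d_j} μ_j ∏_{i=1}^{d_j} (m − r_{j,i}); in particular the j = 1 term is m^n. -/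

import Mathlib

open Finset
open scoped Classical

/-- An edge of an integral gain graph on `Fin n`: the triple `(i, j, g)` represents an edge
from `i` to `j` with gain `g`. -/
abbrev GainEdge (n : ℕ) := Fin n × Fin n × ℤ

/-- `θ` is a potential for the edge set `S`: `θ j - θ i = g` for every edge `(i, j, g) ∈ S`. -/
def IsPotential {n : ℕ} (S : Finset (GainEdge n)) (θ : Fin n → ℤ) : Prop :=
  ∀ e ∈ S, θ e.2.1 - θ e.1 = e.2.2

/-- An edge set is balanced if it admits a potential. -/
def IsBalanced {n : ℕ} (S : Finset (GainEdge n)) : Prop :=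
  ∃ θ : Fin n → ℤ, IsPotential S θ

/-- Two vertices lie in the same connected component of (the underlying graph of) `S`. -/
def SameComp {n : ℕ} (S : Finset (GainEdge n)) (u v : Fin n) : Prop :=
  Relation.EqvGen (fun a b => ∃ g : ℤ, (a, b, g) ∈ S) u v

/-- The partition `π(S)` of the vertex set into the connected components of `S`,
represented as the finite set of its blocks. -/
noncomputable def blocks {n : ℕ} (S : Finset (GainEdge n)) : Finset (Finset (Fin n)) :=
  Finset.univ.image fun v => Finset.univ.filter fun u => SameComp S u v

/-- A balanced edge set `B ⊆ E` is closed (in `E`) if adjoining to `B` any edge of `E ∖ B` whose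
endpoints lie in the same block of `π(B)` destroys balance. -/
def GGClosed {n : ℕ} (E B : Finset (GainEdge n)) : Prop :=
  ∀ e ∈ E \ B, SameComp B e.1 e.2.1 → ¬ IsBalanced (insert e B)

/-- The poset `Lat^b(E)` of closed balanced subsets of `E` (as a finite set, ordered by
inclusion). -/
noncomputable def Latb {n : ℕ} (E : Finset (GainEdge n)) : Finset (Finset (GainEdge n)) :=
  E.powerset.filter fun B => IsBalanced B ∧ GGClosed E B

/-- A coloration `x` is proper for `E` if `x j ≠ x i + g` for every edge `(i, j, g) ∈ E`. -/
def ProperFor {n : ℕ} (E : Finset (GainEdge n)) (x : Fin n → ℤ) : Prop :=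
  ∀ e ∈ E, x e.2.1 ≠ x e.1 + e.2.2

/-- The number of proper colorations of `E` with colors in `{1, …, m}`. -/
noncomputable def properCount {n : ℕ} (E : Finset (GainEdge n)) (m : ℤ) : ℕ :=
  Nat.card {x : Fin n → ℤ // (∀ v, 1 ≤ x v ∧ x v ≤ m) ∧ ProperFor E x}

/-!
Inclusion–exclusion over the hyperplanes gives `f(m) = ∑_{S ⊆ E} (-1)^|S| N_S(m)`, where `N_S(m)`
counts the points of the cube satisfying every equation `x j - x i = g` of `S`. Order `E` and view
the edge `(i, j, g)` as the vector `(eⱼ - eᵢ, g)`. Toggling the least element that closes a broken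
circuit preserves the solution set and reverses the sign, so only the sets without broken
circuits (NBC sets) survive; such a set has independent edge vectors. If it is balanced, it is a
forest, so `π(S)` has `d = n - |S|` blocks, and its solutions are a fixed potential `θ` shifted
independently on each block; on the block `B` the shift takes `m - (max_B θ - min_B θ)` values.
Each balanced NBC set therefore contributes `(-1)^(n-d) ∏_B (m - r_B)` as soon as `m ≥ r_B` for
all `B` (so every `μ_j` is `1`), and the empty set contributes `m^n`.
-/

theorem card_filter_forall_not_eq_sum_powerset {α β : Type*} (X : Finset β) (E : Finset α)
    (P : α → β → Prop) [∀ a b, Decidable (P a b)] :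
    (#{x ∈ X | ∀ e ∈ E, ¬P e x} : ℤ) =
      ∑ S ∈ E.powerset, (-1 : ℤ) ^ #S * #{x ∈ X | ∀ e ∈ S, P e x} := by
  have hfiber (x : β) : ∑ S ∈ E.powerset with ∀ e ∈ S, P e x, (-1 : ℤ) ^ #S =
      if ∀ e ∈ E, ¬P e x then 1 else 0 := by
    have : {S ∈ E.powerset | ∀ e ∈ S, P e x} = {e ∈ E | P e x}.powerset := by
      ext S
      simp only [mem_filter, mem_powerset, subset_iff]
      grind
    simp only [this, sum_powerset_neg_one_pow_card, filter_eq_empty_iff]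
  simp_rw [card_filter, Nat.cast_sum, mul_sum, Nat.cast_ite, Nat.cast_one, Nat.cast_zero,
    mul_ite, mul_one, mul_zero]
  rw [sum_comm]
  refine sum_congr rfl fun x _ => ?_
  rw [← sum_filter, hfiber]

theorem Int.natCast_prod_toNat {ι : Type*} (s : Finset ι) (f : ι → ℤ) :
    (((∏ i ∈ s, (f i).toNat) : ℕ) : ℤ) = if ∀ i ∈ s, 0 ≤ f i then (∏ i ∈ s, f i : ℤ) else 0 := by
  split_ifs with h
  · push_cast
    exact prod_congr rfl fun i hi => Int.toNat_of_nonneg (h i hi)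
  · simp only [not_forall, not_le] at h
    obtain ⟨i, hi, hneg⟩ := h
    rw [Nat.cast_eq_zero]
    exact prod_eq_zero hi (Int.toNat_of_nonpos hneg.le)

theorem Finset.exists_equiv_fin_apply_zero {β : Type*} {s : Finset β} {b : β} (hb : b ∈ s) :
    ∃ σ : Fin #s ≃ s, σ ⟨0, card_pos.2 ⟨b, hb⟩⟩ = ⟨b, hb⟩ :=
  ⟨(Equiv.swap ⟨0, card_pos.2 ⟨b, hb⟩⟩ (s.equivFin ⟨b, hb⟩)).trans s.equivFin.symm, by simp⟩

theorem Finset.exists_equiv_fin_antitone {β γ : Type*} [LinearOrder γ] (s : Finset β)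
    (w : β → γ) : ∃ τ : Fin #s ≃ s, Antitone fun i => w (τ i) := by
  let f : Fin #s → γᵒᵈ := fun i => OrderDual.toDual (w (s.equivFin.symm i))
  exact ⟨(Tuple.sort f).trans s.equivFin.symm, Tuple.monotone_sort f⟩

theorem Finset.forall_equiv_fin_iff {β : Type*} {s : Finset β} (τ : Fin #s ≃ s) (p : β → Prop) :
    (∀ i, p (τ i)) ↔ ∀ b ∈ s, p b :=
  (τ.forall_congr_right (q := fun b : s => p b)).trans Subtype.forall

theorem Finset.prod_equiv_fin {β M : Type*} [CommMonoid M] {s : Finset β} (τ : Fin #s ≃ s)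
    (f : β → M) : ∏ i, f (τ i) = ∏ b ∈ s, f b := by
  rw [τ.prod_comp (fun b => f b), prod_coe_sort]

noncomputable def spread {α : Type*} (θ : α → ℤ) (B : Finset α) : ℕ :=
  if h : B.Nonempty then (B.sup' h θ - B.inf' h θ).toNat else 0

theorem spread_eq {α : Type*} (θ : α → ℤ) {B : Finset α} (hB : B.Nonempty) :
    (spread θ B : ℤ) = B.sup' hB θ - B.inf' hB θ := by
  rw [spread, dif_pos hB, Int.toNat_of_nonneg (sub_nonneg.2
    ((inf'_le θ hB.choose_spec).trans (le_sup' θ hB.choose_spec)))]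

theorem spread_singleton {α : Type*} (θ : α → ℤ) (a : α) : spread θ {a} = 0 := by
  simp [spread]

section BrokenCircuits

variable {α ι M : Type*} (K : Type*) {V : Type*} [LinearOrder ι] [Field K] [AddCommGroup V]
  [Module K V] (ord : α → ι) (v : α → V)

/-- `S` contains a broken circuit of `E` (for the order `ord`) iff this set is nonempty. -/
noncomputable def brokenCircuitMins (E S : Finset α) : Finset α :=
  {e ∈ E | v e ∈ Submodule.span K (v '' {s | s ∈ S ∧ ord e < ord s})}

def IsLeastBrokenCircuitMin (E S : Finset α) (a : α) : Prop :=
  a ∈ brokenCircuitMins K ord v E S ∧ ∀ e ∈ brokenCircuitMins K ord v E S, ord a ≤ ord e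

variable {K ord v} {E S : Finset α}

theorem mem_brokenCircuitMins {e : α} :
    e ∈ brokenCircuitMins K ord v E S ↔
      e ∈ E ∧ v e ∈ Submodule.span K (v '' {s | s ∈ S ∧ ord e < ord s}) :=
  mem_filter

variable [DecidableEq α]

theorem linearIndepOn_of_brokenCircuitMins_eq_empty (hSE : S ⊆ E) (hord : Set.InjOn ord S)
    (h : brokenCircuitMins K ord v E S = ∅) : LinearIndepOn K v (S : Set α) := by
  rw [linearIndepOn_iff]
  intro l hl hl0
  by_contra hne
  obtain ⟨s₀, hs₀, hmin⟩ := l.support.exists_min_image ord (Finsupp.support_nonempty_iff.2 hne)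
  have hs₀S : s₀ ∈ S := hl hs₀
  refine eq_empty_iff_forall_notMem.1 h s₀ (mem_brokenCircuitMins.2 ⟨hSE hs₀S, ?_⟩)
  -- the `ord`-least element of the support of a dependency closes a broken circuit
  have hrel : l s₀ • v s₀ = -∑ s ∈ l.support.erase s₀, l s • v s := by
    rw [Finsupp.linearCombination_apply, Finsupp.sum, ← add_sum_erase _ _ hs₀] at hl0
    exact eq_neg_of_add_eq_zero_left hl0
  have hv : v s₀ = (l s₀)⁻¹ • -∑ s ∈ l.support.erase s₀, l s • v s := by
    rw [← hrel, smul_smul, inv_mul_cancel₀ (Finsupp.mem_support_iff.1 hs₀), one_smul]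
  rw [hv]
  refine Submodule.smul_mem _ _ (Submodule.neg_mem _ (Submodule.sum_mem _ fun s hs => ?_))
  obtain ⟨hss₀, hs⟩ := mem_erase.1 hs
  have hlt : ord s₀ < ord s :=
    (hmin s hs).lt_of_ne fun heq => hss₀ (hord (hl hs₀) (hl hs) heq).symm
  exact Submodule.smul_mem _ _ (Submodule.subset_span (Set.mem_image_of_mem v
    (show s ∈ {t | t ∈ S ∧ ord s₀ < ord t} from ⟨hl hs, hlt⟩)))

noncomputable def toggle (a : α) (S : Finset α) : Finset α :=
  if a ∈ S then S.erase a else insert a S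

theorem toggle_toggle (a : α) (S : Finset α) : toggle a (toggle a S) = S := by
  unfold toggle
  split_ifs with h₁ h₂ h₂
  · simp at h₂
  · exact insert_erase h₁
  · exact erase_insert h₁
  · simp at h₂

theorem neg_one_pow_card_toggle (a : α) (S : Finset α) :
    (-1 : ℤ) ^ #(toggle a S) = -(-1) ^ #S := by
  unfold toggle
  split_ifs with h
  · rw [← card_erase_add_one h, pow_succ]; ring
  · rw [card_insert_of_notMem h, pow_succ]; ring

theorem toggle_subset {a : α} (ha : a ∈ E) (hS : S ⊆ E) : toggle a S ⊆ E := by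
  unfold toggle
  split_ifs
  · exact (erase_subset _ _).trans hS
  · exact insert_subset ha hS

theorem upper_toggle (a : α) (S : Finset α) :
    {s | s ∈ toggle a S ∧ ord a < ord s} = {s | s ∈ S ∧ ord a < ord s} := by
  ext s
  simp only [Set.mem_ofPred_eq, toggle]
  split_ifs <;> simp only [mem_erase, mem_insert] <;> grind

theorem IsLeastBrokenCircuitMin.toggle {a : α}
    (h : IsLeastBrokenCircuitMin K ord v E S a) :
    IsLeastBrokenCircuitMin K ord v E (toggle a S) a := by
  obtain ⟨ha, hmin⟩ := h
  rw [mem_brokenCircuitMins] at ha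
  refine ⟨mem_brokenCircuitMins.2 ⟨ha.1, by rw [upper_toggle]; exact ha.2⟩, fun e he => ?_⟩
  -- an `e` below `a` would already lie in `brokenCircuitMins` of `S`, as `v a` is spanned by
  -- elements of `S` above `a`
  by_contra! hea
  refine (hmin e (mem_brokenCircuitMins.2 ⟨(mem_brokenCircuitMins.1 he).1, ?_⟩)).not_gt hea
  refine Submodule.span_le.2 ?_ (mem_brokenCircuitMins.1 he).2
  rintro _ ⟨s, ⟨hs, hes⟩, rfl⟩
  by_cases hsa : s = a
  · subst hsa
    exact Submodule.span_mono (Set.image_mono fun t ht => by exact ⟨ht.1, hea.trans ht.2⟩) ha.2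
  · refine Submodule.subset_span (Set.mem_image_of_mem v
      (show s ∈ {t | t ∈ S ∧ ord e < ord t} from ⟨?_, hes⟩))
    unfold _root_.toggle at hs
    split_ifs at hs
    · exact mem_of_mem_erase hs
    · exact (mem_insert.1 hs).resolve_left hsa

theorem toggle_ne (a : α) (S : Finset α) : toggle a S ≠ S := by
  unfold toggle
  split_ifs with h
  · exact fun heq => notMem_erase a S (heq.symm ▸ h)
  · exact fun heq => h (heq ▸ mem_insert_self a S)

theorem apply_toggle_eq_of_mem_span [AddCommGroup M] {F : Finset α → M}
    (hF : ∀ a (S : Finset α), v a ∈ Submodule.span K (v '' (S : Set α)) → F (insert a S) = F S)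
    {a : α} (ha : v a ∈ Submodule.span K (v '' {s | s ∈ S ∧ ord a < ord s})) :
    F (toggle a S) = F S := by
  unfold toggle
  split_ifs with h
  · have hspan : v a ∈ Submodule.span K (v '' ↑(S.erase a)) :=
      Submodule.span_mono (Set.image_mono fun s hs =>
        mem_erase.2 ⟨fun hsa => (hsa ▸ hs.2).false, hs.1⟩) ha
    rw [← hF a _ hspan, insert_erase h]
  · exact hF a S (Submodule.span_mono (Set.image_mono fun s hs => hs.1) ha)

/-- Whitney–Rota cancellation: toggling the least element of `brokenCircuitMins` is a
sign-reversing involution on the subsets containing a broken circuit. -/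
theorem sum_powerset_eq_sum_brokenCircuitMins_eq_empty [AddCommGroup M]
    (hord : Set.InjOn ord E) (F : Finset α → M)
    (hF : ∀ a (S : Finset α), v a ∈ Submodule.span K (v '' (S : Set α)) → F (insert a S) = F S) :
    ∑ S ∈ E.powerset, (-1 : ℤ) ^ #S • F S =
      ∑ S ∈ E.powerset with brokenCircuitMins K ord v E S = ∅, (-1 : ℤ) ^ #S • F S := by
  rw [← sum_filter_add_sum_filter_not E.powerset (brokenCircuitMins K ord v E · = ∅),
    add_eq_left]
  have hleast (S : Finset α) (hS : brokenCircuitMins K ord v E S ≠ ∅) :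
      ∃ a, IsLeastBrokenCircuitMin K ord v E S a :=
    (brokenCircuitMins K ord v E S).exists_min_image ord (nonempty_iff_ne_empty.2 hS)
  choose p hp using hleast
  have hp_toggle (S : Finset α) (hS : brokenCircuitMins K ord v E S ≠ ∅)
      (hS' : brokenCircuitMins K ord v E (toggle (p S hS) S) ≠ ∅) :
      p (toggle (p S hS) S) hS' = p S hS := by
    have h₁ := (hp S hS).toggle
    have h₂ := hp _ hS'
    refine hord (mem_brokenCircuitMins.1 h₂.1).1 (mem_brokenCircuitMins.1 h₁.1).1 ?_
    exact (h₂.2 _ h₁.1).antisymm (h₁.2 _ h₂.1)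
  refine sum_involution (fun S hS => toggle (p S (mem_filter.1 hS).2) S) (fun S hS => ?_)
    (fun S _ _ => toggle_ne _ _) (fun S hS => ?_) (fun S hS => ?_)
  · rw [neg_one_pow_card_toggle,
      apply_toggle_eq_of_mem_span hF (mem_brokenCircuitMins.1 (hp S _).1).2, neg_smul,
      add_neg_cancel]
  · obtain ⟨hSE, hS⟩ := mem_filter.1 hS
    have h₁ := (hp S hS).toggle
    exact mem_filter.2 ⟨mem_powerset.2 (toggle_subset (mem_brokenCircuitMins.1 h₁.1).1
      (mem_powerset.1 hSE)), ne_empty_of_mem h₁.1⟩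
  · simp only [hp_toggle, toggle_toggle]

end BrokenCircuits

section EdgeVectors

variable {n : ℕ} {S T : Finset (GainEdge n)} {θ x : Fin n → ℤ}

/-- The equation `x j - x i = g` of the edge `(i, j, g)`, homogenized: linear dependence among
edge vectors decides which edge equations imply which. -/
def edgeVec (e : GainEdge n) : (Fin n → ℚ) × ℚ :=
  (Pi.single e.2.1 1 - Pi.single e.1 1, e.2.2)

noncomputable def evalAt (x : Fin n → ℤ) : (Fin n → ℚ) × ℚ →ₗ[ℚ] ℚ :=
  Fintype.linearCombination ℚ (fun i => (x i : ℚ)) ∘ₗ LinearMap.fst ℚ _ _ - LinearMap.snd ℚ _ _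

theorem evalAt_edgeVec (x : Fin n → ℤ) (e : GainEdge n) :
    evalAt x (edgeVec e) = x e.2.1 - x e.1 - e.2.2 := by
  simp [evalAt, edgeVec, Fintype.linearCombination_apply_single]

theorem edgeVec_ne_zero {e : GainEdge n} (he : e.1 ≠ e.2.1) : edgeVec e ≠ 0 := by
  intro h
  have := congrFun (congrArg Prod.fst h) e.2.1
  simp [edgeVec, he.symm] at this

theorem IsPotential.mono (hθ : IsPotential S θ)
    (hTS : T ⊆ S) : IsPotential T θ :=
  fun e he => hθ e (hTS he)

theorem IsPotential.edge_of_mem_span (hx : IsPotential S x) {a : GainEdge n}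
    (ha : edgeVec a ∈ Submodule.span ℚ (edgeVec '' (S : Set (GainEdge n)))) :
    x a.2.1 - x a.1 = a.2.2 := by
  have hker :
      Submodule.span ℚ (edgeVec '' (S : Set (GainEdge n))) ≤ LinearMap.ker (evalAt x) := by
    rw [Submodule.span_le]
    rintro _ ⟨e, he, rfl⟩
    simp [evalAt_edgeVec, ← hx e he]
  have := hker ha
  rw [LinearMap.mem_ker, evalAt_edgeVec, sub_eq_zero] at this
  exact_mod_cast this

theorem IsPotential.mem_span_of_sameComp (hθ : IsPotential T θ) {u v : Fin n} (h : SameComp T u v) :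
    (Pi.single v 1 - Pi.single u 1, ((θ v - θ u : ℤ) : ℚ)) ∈
      Submodule.span ℚ (edgeVec '' (T : Set (GainEdge n))) := by
  induction h with
  | rel a b hab =>
    obtain ⟨g, hg⟩ := hab
    have hgain : ((θ b - θ a : ℤ) : ℚ) = g := by exact_mod_cast hθ _ hg
    rw [hgain]
    exact Submodule.subset_span ⟨(a, b, g), hg, rfl⟩
  | refl a =>
    rw [sub_self, sub_self, Int.cast_zero]
    exact Submodule.zero_mem _
  | symm a b _ ih =>
    convert Submodule.neg_mem _ ih using 1
    ext <;> simp
  | trans a b c _ _ ih₁ ih₂ =>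
    convert Submodule.add_mem _ ih₁ ih₂ using 1
    ext <;> simp

theorem isPotential_insert_iff_of_mem_span {a : GainEdge n}
    (ha : edgeVec a ∈ Submodule.span ℚ (edgeVec '' (S : Set (GainEdge n)))) :
    IsPotential (insert a S) x ↔ IsPotential S x := by
  refine ⟨fun hx => hx.mono (subset_insert a S), fun hx e he => ?_⟩
  rcases mem_insert.1 he with rfl | he
  · exact hx.edge_of_mem_span ha
  · exact hx e he

/-- In a balanced set with independent edge vectors, no edge closes a cycle: a cycle through `e`
would express `edgeVec e` by the other edges of the cycle. -/
theorem not_sameComp_erase (hθ : IsPotential S θ)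
    (hS : LinearIndepOn ℚ edgeVec (S : Set (GainEdge n))) {e : GainEdge n} (he : e ∈ S) :
    ¬SameComp (S.erase e) e.1 e.2.1 := by
  intro hcycle
  have hspan := (hθ.mono (erase_subset e S)).mem_span_of_sameComp hcycle
  rw [hθ e he] at hspan
  refine linearIndepOn_iff_notMem_span.1 hS e he ?_
  simpa [coe_erase, edgeVec] using hspan

end EdgeVectors

section Components

variable {n : ℕ} {S T : Finset (GainEdge n)} {u v w : Fin n}

theorem sameComp_equivalence (S : Finset (GainEdge n)) : Equivalence (SameComp S) :=
  Relation.EqvGen.is_equivalence _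

theorem sameComp_of_mem {e : GainEdge n} (he : e ∈ S) : SameComp S e.1 e.2.1 :=
  Relation.EqvGen.rel _ _ ⟨e.2.2, he⟩

theorem SameComp.mono (h : SameComp S u v) (hST : S ⊆ T) : SameComp T u v :=
  Relation.EqvGen.mono (fun _ _ ⟨g, hg⟩ => ⟨g, hST hg⟩) _ _ h

theorem sameComp_empty_iff : SameComp (∅ : Finset (GainEdge n)) u v ↔ u = v := by
  refine ⟨fun h => ?_, fun h => h ▸ (sameComp_equivalence _).refl u⟩
  induction h with
  | rel a b hab => simp at hab
  | refl a => rfl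
  | symm a b _ ih => exact ih.symm
  | trans a b c _ _ ih₁ ih₂ => exact ih₁.trans ih₂

noncomputable def block (S : Finset (GainEdge n)) (v : Fin n) : Finset (Fin n) :=
  univ.filter fun u => SameComp S u v

theorem mem_block : u ∈ block S v ↔ SameComp S u v := by
  simp [block]

theorem mem_block_self (S : Finset (GainEdge n)) (v : Fin n) : v ∈ block S v :=
  mem_block.2 ((sameComp_equivalence S).refl v)

theorem SameComp.mem_block_iff (h : SameComp S u v) : u ∈ block S w ↔ v ∈ block S w := by
  simp only [mem_block]
  exact ⟨(sameComp_equivalence S).trans ((sameComp_equivalence S).symm h),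
    (sameComp_equivalence S).trans h⟩

theorem block_eq_block_iff : block S u = block S v ↔ SameComp S u v := by
  refine ⟨fun h => mem_block.1 (h ▸ mem_block_self S u), fun h => ?_⟩
  ext w
  simp only [mem_block]
  exact ⟨fun hw => (sameComp_equivalence S).trans hw h,
    fun hw => (sameComp_equivalence S).trans hw ((sameComp_equivalence S).symm h)⟩

theorem mem_blocks {B : Finset (Fin n)} : B ∈ blocks S ↔ ∃ v, block S v = B := by
  simp [blocks, block]

theorem block_mem_blocks (S : Finset (GainEdge n)) (v : Fin n) : block S v ∈ blocks S :=
  mem_blocks.2 ⟨v, rfl⟩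

theorem eq_block_of_mem_blocks {B : Finset (Fin n)} (hB : B ∈ blocks S) (hu : u ∈ B) :
    B = block S u := by
  obtain ⟨v, rfl⟩ := mem_blocks.1 hB
  exact block_eq_block_iff.2 ((sameComp_equivalence S).symm (mem_block.1 hu))

theorem nonempty_of_mem_blocks {B : Finset (Fin n)} (hB : B ∈ blocks S) : B.Nonempty := by
  obtain ⟨v, rfl⟩ := mem_blocks.1 hB
  exact ⟨v, mem_block_self S v⟩

theorem blocks_nonempty (hn : 0 < n) (S : Finset (GainEdge n)) : (blocks S).Nonempty :=
  ⟨_, block_mem_blocks S ⟨0, hn⟩⟩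

theorem block_empty (v : Fin n) : block (∅ : Finset (GainEdge n)) v = {v} := by
  ext u
  simp [mem_block, sameComp_empty_iff]

theorem card_blocks_empty : #(blocks (∅ : Finset (GainEdge n))) = n := by
  change #(univ.image fun v => block ∅ v) = n
  simp_rw [block_empty]
  rw [card_image_of_injective _ singleton_injective, card_univ, Fintype.card_fin]

theorem sameComp_insert_iff (e : GainEdge n) (T : Finset (GainEdge n)) :
    SameComp (insert e T) u v ↔
      SameComp T u v ∨ (u ∈ block T e.1 ∪ block T e.2.1 ∧ v ∈ block T e.1 ∪ block T e.2.1) := by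
  have hT := sameComp_equivalence T
  have hJ : ∀ w ∈ block T e.1 ∪ block T e.2.1, SameComp (insert e T) w e.1 := by
    intro w hw
    rcases mem_union.1 hw with hw | hw
    · exact (mem_block.1 hw).mono (subset_insert e T)
    · exact (sameComp_equivalence _).trans ((mem_block.1 hw).mono (subset_insert e T))
        ((sameComp_equivalence _).symm (sameComp_of_mem (mem_insert_self e T)))
  refine ⟨fun h => ?_, ?_⟩
  · induction h with
    | rel a b hab =>
      obtain ⟨g, hg⟩ := hab
      rcases mem_insert.1 hg with rfl | hg
      · exact Or.inr ⟨mem_union_left _ (mem_block_self T a),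
          mem_union_right _ (mem_block_self T b)⟩
      · exact Or.inl (Relation.EqvGen.rel _ _ ⟨g, hg⟩)
    | refl a => exact Or.inl (hT.refl a)
    | symm a b _ ih => exact ih.imp hT.symm And.symm
    | trans a b c _ _ ih₁ ih₂ =>
      rcases ih₁ with hab | ⟨ha, hb⟩ <;> rcases ih₂ with hbc | ⟨hb', hc⟩
      · exact Or.inl (hT.trans hab hbc)
      · exact Or.inr ⟨by simpa only [mem_union, hab.mem_block_iff] using hb', hc⟩
      · exact Or.inr ⟨ha, by simpa only [mem_union, hbc.mem_block_iff] using hb⟩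
      · exact Or.inr ⟨ha, hc⟩
  · rintro (h | ⟨hu, hv⟩)
    · exact h.mono (subset_insert e T)
    · exact (sameComp_equivalence _).trans (hJ u hu) ((sameComp_equivalence _).symm (hJ v hv))

theorem block_insert (e : GainEdge n) (T : Finset (GainEdge n)) (v : Fin n) :
    block (insert e T) v =
      if v ∈ block T e.1 ∪ block T e.2.1 then block T e.1 ∪ block T e.2.1 else block T v := by
  ext u
  rw [mem_block, sameComp_insert_iff]
  split_ifs with hv
  · refine ⟨fun h => h.elim (fun huv => ?_) And.left, fun hu => Or.inr ⟨hu, hv⟩⟩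
    simpa only [mem_union, huv.mem_block_iff] using hv
  · exact ⟨fun h => mem_block.2 (h.resolve_right fun h' => hv h'.2),
      fun h => Or.inl (mem_block.1 h)⟩

theorem blocks_insert (e : GainEdge n) (T : Finset (GainEdge n)) :
    blocks (insert e T) = insert (block T e.1 ∪ block T e.2.1)
      (((blocks T).erase (block T e.1)).erase (block T e.2.1)) := by
  ext B
  simp only [mem_blocks, mem_insert, mem_erase, block_insert]
  constructor
  · rintro ⟨v, rfl⟩
    split_ifs with hv
    · exact Or.inl rfl
    · refine Or.inr ⟨fun h => hv ?_, fun h => hv ?_, v, rfl⟩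
      · exact mem_union_right _ (h ▸ mem_block_self T v)
      · exact mem_union_left _ (h ▸ mem_block_self T v)
  · rintro (rfl | ⟨hB₂, hB₁, v, rfl⟩)
    · exact ⟨e.1, if_pos (mem_union_left _ (mem_block_self T e.1))⟩
    · refine ⟨v, if_neg fun hv => ?_⟩
      rcases mem_union.1 hv with hv | hv
      · exact hB₁ (block_eq_block_iff.2 (mem_block.1 hv))
      · exact hB₂ (block_eq_block_iff.2 (mem_block.1 hv))

theorem card_blocks_insert {e : GainEdge n} (hnc : ¬SameComp T e.1 e.2.1) :
    #(blocks (insert e T)) + 1 = #(blocks T) := by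
  have hne : block T e.2.1 ≠ block T e.1 := fun h => hnc
    ((sameComp_equivalence T).symm (block_eq_block_iff.1 h))
  have hfresh : block T e.1 ∪ block T e.2.1 ∉
      ((blocks T).erase (block T e.1)).erase (block T e.2.1) := by
    simp only [mem_erase, not_and]
    intro _ hne₁ hmem
    exact hne₁ (eq_block_of_mem_blocks hmem (mem_union_left _ (mem_block_self T e.1)))
  rw [blocks_insert, card_insert_of_notMem hfresh,
    card_erase_of_mem (mem_erase.2 ⟨hne, block_mem_blocks T e.2.1⟩),
    card_erase_of_mem (block_mem_blocks T e.1)]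
  have : 2 ≤ #(blocks T) := by
    rw [← card_pair hne]
    exact card_le_card (insert_subset (block_mem_blocks T e.2.1)
      (singleton_subset_iff.2 (block_mem_blocks T e.1)))
  omega

/-- Balanced sets with independent edge vectors are forests. -/
theorem card_blocks_add_card {θ : Fin n → ℤ} (hθ : IsPotential S θ)
    (hS : LinearIndepOn ℚ edgeVec (S : Set (GainEdge n))) : #(blocks S) + #S = n := by
  induction S using Finset.induction_on with
  | empty => simp [card_blocks_empty]
  | insert e T he ih =>
    have hnc := not_sameComp_erase hθ hS (mem_insert_self e T)
    rw [erase_insert he] at hnc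
    have hcard := card_blocks_insert hnc
    have hT := ih (hθ.mono (subset_insert e T)) (hS.mono (by simp))
    rw [card_insert_of_notMem he]
    omega

end Components

section Counting

variable {n : ℕ}

noncomputable def cube (n : ℕ) (m : ℤ) : Finset (Fin n → ℤ) :=
  Fintype.piFinset fun _ => Icc 1 m

theorem mem_cube {m : ℤ} {x : Fin n → ℤ} : x ∈ cube n m ↔ ∀ v, 1 ≤ x v ∧ x v ≤ m := by
  simp only [cube, Fintype.mem_piFinset, mem_Icc]

theorem properCount_eq_card (E : Finset (GainEdge n)) (m : ℤ) :
    properCount E m = #{x ∈ cube n m | ProperFor E x} := by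
  rw [properCount, ← Nat.card_eq_finsetCard]
  exact Nat.card_congr (Equiv.subtypeEquivRight fun x => by rw [mem_filter, mem_cube])

variable {S : Finset (GainEdge n)} {θ x : Fin n → ℤ}

theorem IsPotential.sub_eq_sub_of_sameComp (hx : IsPotential S x) (hθ : IsPotential S θ)
    {u v : Fin n} (h : SameComp S u v) : x u - θ u = x v - θ v := by
  induction h with
  | rel a b hab =>
    obtain ⟨g, hg⟩ := hab
    have hxg : x b - x a = g := hx _ hg
    have hθg : θ b - θ a = g := hθ _ hg
    omega
  | refl a => rfl
  | symm a b _ ih => exact ih.symm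
  | trans a b c _ _ ih₁ ih₂ => exact ih₁.trans ih₂

/-- Potentials of `S` are `θ` shifted by a constant on each block of `π(S)`; in the cube the
shift on `B` ranges over an interval. -/
theorem card_isPotential_cube_eq_card_piFinset (hθ : IsPotential S θ) (m : ℤ) :
    #{x ∈ cube n m | IsPotential S x} =
      #(Fintype.piFinset fun B : blocks S =>
        Icc (1 - B.1.inf' (nonempty_of_mem_blocks B.2) θ)
          (m - B.1.sup' (nonempty_of_mem_blocks B.2) θ)) := by
  have hrep (B : blocks S) : B.1 = block S (B.1.min' (nonempty_of_mem_blocks B.2)) :=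
    eq_block_of_mem_blocks B.2 (min'_mem _ _)
  refine card_bij' (fun x _ B => x (B.1.min' (nonempty_of_mem_blocks B.2)) -
      θ (B.1.min' (nonempty_of_mem_blocks B.2)))
    (fun t _ u => θ u + t ⟨block S u, block_mem_blocks S u⟩) (fun x hx => ?_) (fun t ht => ?_)
    (fun x hx => ?_) (fun t _ => ?_)
  · obtain ⟨hcube, hx⟩ := mem_filter.1 hx
    rw [mem_cube] at hcube
    refine Fintype.mem_piFinset.2 fun B => mem_Icc.2 ⟨?_, ?_⟩
    · refine sub_le_comm.1 (le_inf' _ _ fun u hu => ?_)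
      have := hx.sub_eq_sub_of_sameComp hθ (mem_block.1 ((hrep B).le hu))
      linarith [(hcube u).1]
    · refine le_sub_comm.1 (sup'_le _ _ fun u hu => ?_)
      have := hx.sub_eq_sub_of_sameComp hθ (mem_block.1 ((hrep B).le hu))
      linarith [(hcube u).2]
  · rw [Fintype.mem_piFinset] at ht
    refine mem_filter.2 ⟨mem_cube.2 fun u => ?_, fun e he => ?_⟩
    · have hu := mem_Icc.1 (ht ⟨block S u, block_mem_blocks S u⟩)
      have h₁ := inf'_le θ (mem_block_self S u)
      have h₂ := le_sup' θ (mem_block_self S u)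
      constructor <;> linarith [hu.1, hu.2]
    · have hblock : block S e.1 = block S e.2.1 := block_eq_block_iff.2 (sameComp_of_mem he)
      simp only [hblock, ← hθ e he]
      ring
  · funext u
    have := (mem_filter.1 hx).2.sub_eq_sub_of_sameComp hθ (mem_block.1
      (min'_mem (block S u) (nonempty_of_mem_blocks (block_mem_blocks S u))))
    simp only
    omega
  · funext B
    simp only [add_sub_cancel_left]
    exact congrArg t (Subtype.ext (hrep B).symm)

theorem card_isPotential_cube (hθ : IsPotential S θ) (m : ℤ) :
    #{x ∈ cube n m | IsPotential S x} = ∏ B ∈ blocks S, (m - spread θ B).toNat := by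
  rw [card_isPotential_cube_eq_card_piFinset hθ, Fintype.card_piFinset,
    ← prod_coe_sort (blocks S)]
  refine prod_congr rfl fun B _ => ?_
  rw [Int.card_Icc, spread_eq θ (nonempty_of_mem_blocks B.2)]
  congr 1
  ring

theorem spread_eq_zero_of_mem_blocks_empty (θ : Fin n → ℤ) {B : Finset (Fin n)}
    (hB : B ∈ blocks (∅ : Finset (GainEdge n))) : spread θ B = 0 := by
  obtain ⟨v, rfl⟩ := mem_blocks.1 hB
  rw [block_empty, spread_singleton]

end Counting

section Assembly

variable {n : ℕ} {E S : Finset (GainEdge n)}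

noncomputable def potential (S : Finset (GainEdge n)) : Fin n → ℤ :=
  Classical.epsilon (IsPotential S)

theorem IsBalanced.isPotential_potential (h : IsBalanced S) : IsPotential S (potential S) :=
  Classical.epsilon_spec h

/-- Edges are ordered by `Encodable.encode`; any injective order would do. -/
noncomputable def nbcBalanced (E : Finset (GainEdge n)) : Finset (Finset (GainEdge n)) :=
  {S ∈ E.powerset | brokenCircuitMins ℚ Encodable.encode edgeVec E S = ∅ ∧ IsBalanced S}

theorem empty_mem_nbcBalanced (hE : ∀ e ∈ E, e.1 ≠ e.2.1) : ∅ ∈ nbcBalanced E := by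
  refine mem_filter.2 ⟨empty_mem_powerset E, eq_empty_iff_forall_notMem.2 fun e he => ?_,
    0, fun e he => absurd he (notMem_empty e)⟩
  obtain ⟨heE, hspan⟩ := mem_brokenCircuitMins.1 he
  simp only [notMem_empty, false_and, Set.ofPred_false, Set.image_empty, Submodule.span_empty,
    Submodule.mem_bot] at hspan
  exact edgeVec_ne_zero (hE e heE) hspan

theorem card_blocks_add_card_of_mem_nbcBalanced (hS : S ∈ nbcBalanced E) :
    #(blocks S) + #S = n := by
  obtain ⟨hSE, hnbc, hbal⟩ := mem_filter.1 hS
  exact card_blocks_add_card hbal.isPotential_potential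
    (linearIndepOn_of_brokenCircuitMins_eq_empty (mem_powerset.1 hSE)
      (Encodable.encode_injective.injOn) hnbc)

theorem card_blocks_lt_of_mem_nbcBalanced (hS : S ∈ nbcBalanced E) (hne : S ≠ ∅) :
    #(blocks S) < n := by
  have hcard := card_blocks_add_card_of_mem_nbcBalanced hS
  have hpos := (nonempty_iff_ne_empty.2 hne).card_pos
  omega

theorem properCount_eq_sum_nbcBalanced (E : Finset (GainEdge n)) (m : ℤ) :
    (properCount E m : ℤ) = ∑ S ∈ nbcBalanced E,
      if ∀ B ∈ blocks S, (spread (potential S) B : ℤ) ≤ m then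
        (-1) ^ (n - #(blocks S)) * ∏ B ∈ blocks S, (m - spread (potential S) B)
      else 0 := by
  have hproper : properCount E m = #{x ∈ cube n m | ∀ e ∈ E, ¬(x e.2.1 - x e.1 = e.2.2)} := by
    rw [properCount_eq_card]
    congr! 3 with x
    exact forall₂_congr fun e _ => by rw [sub_eq_iff_eq_add']
  have hcancel := sum_powerset_eq_sum_brokenCircuitMins_eq_empty (K := ℚ) (v := edgeVec)
    (E := E) Encodable.encode_injective.injOn (fun S => (#{x ∈ cube n m | IsPotential S x} : ℤ))
    fun a S ha => by
      congr 2; exact filter_congr fun x _ => isPotential_insert_iff_of_mem_span ha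
  rw [hproper, card_filter_forall_not_eq_sum_powerset (cube n m) E
    (fun e x => x e.2.1 - x e.1 = e.2.2)]
  have hpot (S : Finset (GainEdge n)) :
      #{x ∈ cube n m | ∀ e ∈ S, x e.2.1 - x e.1 = e.2.2} =
        #{x ∈ cube n m | IsPotential S x} := by
    congr
  simp only [smul_eq_mul] at hcancel
  simp only [hpot]
  rw [hcancel, ← sum_filter_add_sum_filter_not _ IsBalanced, filter_filter]
  rw [sum_eq_zero (s := filter (fun S => ¬IsBalanced S) _) fun S hS => ?_, add_zero]
  · refine sum_congr rfl fun S hS => ?_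
    rw [card_isPotential_cube (mem_filter.1 hS).2.2.isPotential_potential, Int.natCast_prod_toNat]
    simp only [sub_nonneg, ← card_blocks_add_card_of_mem_nbcBalanced hS, Nat.add_sub_cancel_left,
      mul_ite, mul_zero]
  · rw [filter_false_of_mem fun x _ hx => (mem_filter.1 hS).2 ⟨x, hx⟩, card_empty, Nat.cast_zero,
      mul_zero]

end Assembly

theorem piecewise_polynomial_structure_general (n : ℕ) (hn : 1 ≤ n) (E : Finset (GainEdge n))
    (hE : ∀ e ∈ E, e.1 < e.2.1) :
    ∃ (k : ℕ) (hk : 0 < k) (d : Fin k → ℕ) (μ : Fin k → ℕ)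
      (r : (j : Fin k) → Fin (d j) → ℕ),
        d ⟨0, hk⟩ = n ∧
        (∀ j, 0 < d j) ∧
        (∀ j, j ≠ ⟨0, hk⟩ → d j < n) ∧
        μ ⟨0, hk⟩ = 1 ∧
        (∀ j, 0 < μ j) ∧
        (∀ j, ∀ i i' : Fin (d j), i ≤ i' → r j i' ≤ r j i) ∧
        (∀ i, r ⟨0, hk⟩ i = 0) ∧
        (∀ m : ℤ, 0 ≤ m →
          (properCount E m : ℤ) =
            ∑ j ∈ Finset.univ.filter (fun j : Fin k => ∀ i, (r j i : ℤ) ≤ m),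
              (-1 : ℤ) ^ (n - d j) * (μ j : ℤ) * ∏ i, (m - (r j i : ℤ))) := by
  have hempty := empty_mem_nbcBalanced fun e he => (hE e he).ne
  obtain ⟨σ, hσ⟩ := exists_equiv_fin_apply_zero hempty
  choose τ hτ using fun S : Finset (GainEdge n) =>
    exists_equiv_fin_antitone (blocks S) (spread (potential S))
  have hk : 0 < #(nbcBalanced E) := card_pos.2 ⟨∅, hempty⟩
  refine ⟨#(nbcBalanced E), hk, fun j => #(blocks (σ j).1), fun _ => 1,
    fun j i => spread (potential (σ j).1) (τ (σ j).1 i).1, ?_,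
    fun j => card_pos.2 (blocks_nonempty hn _), fun j hj => ?_, rfl, fun _ => one_pos,
    fun j => hτ (σ j).1, fun i => ?_, fun m _ => ?_⟩ <;> dsimp only
  · rw [hσ, card_blocks_empty]
  · exact card_blocks_lt_of_mem_nbcBalanced (σ j).2 fun h =>
      hj (σ.injective (Subtype.ext (h.trans (congrArg Subtype.val hσ).symm)))
  · have h₀ : ∀ B ∈ blocks (σ ⟨0, hk⟩).1, spread (potential (σ ⟨0, hk⟩).1) B = 0 := by
      rw [hσ]
      exact fun B hB => spread_eq_zero_of_mem_blocks_empty _ hB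
    exact h₀ _ (τ _ i).2
  · rw [properCount_eq_sum_nbcBalanced, sum_filter, ← sum_coe_sort (nbcBalanced E), ← σ.sum_comp]
    refine sum_congr rfl fun j _ => ?_
    rw [Nat.cast_one, mul_one, prod_equiv_fin (τ _) fun B => m - spread (potential (σ j).1) B]
    exact if_congr
      (forall_equiv_fin_iff (τ _) fun B => (spread (potential (σ j).1) B : ℤ) ≤ m).symm rfl rfl

/-- **Corollary 3.2** (piecewise polynomial structure).  For a nonempty integral gain graph `E`
on `{1, …, n}` (`n ≥ 1`), there are `k ≥ 1` terms, with degrees `d j` (the first equal to `n`,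
the others less than `n`), positive coefficients `μ j` (the first equal to `1`), and
nonincreasing sequences of nonnegative integer roots `r j 1 ≥ … ≥ r j (d j)` (all zero for the
first term), such that for every integer `m ≥ 0` the number of proper colorations with colors
in `{1, …, m}` equals the sum, over those `j` whose largest root is at most `m`, of
`(−1)^{n − d j} μ j ∏ i (m − r j i)`; in particular the first term is `m ^ n`. -/
theorem piecewise_polynomial_structure (n : ℕ) (hn : 1 ≤ n) (E : Finset (GainEdge n))
    (hE : ∀ e ∈ E, e.1 < e.2.1) (hEne : E.Nonempty) :
    ∃ (k : ℕ) (hk : 0 < k) (d : Fin k → ℕ) (μ : Fin k → ℕ)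
      (r : (j : Fin k) → Fin (d j) → ℕ),
        d ⟨0, hk⟩ = n ∧
        (∀ j, 0 < d j) ∧
        (∀ j, j ≠ ⟨0, hk⟩ → d j < n) ∧
        μ ⟨0, hk⟩ = 1 ∧
        (∀ j, 0 < μ j) ∧
        (∀ j, ∀ i i' : Fin (d j), i ≤ i' → r j i' ≤ r j i) ∧
        (∀ i, r ⟨0, hk⟩ i = 0) ∧
        (∀ m : ℤ, 0 ≤ m →
          (properCount E m : ℤ) =
            ∑ j ∈ Finset.univ.filter (fun j : Fin k => ∀ i, (r j i : ℤ) ≤ m),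
              (-1 : ℤ) ^ (n - d j) * (μ j : ℤ) * ∏ i, (m - (r j i : ℤ))) :=
  piecewise_polynomial_structure_general n hn E hE
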